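/- Every linear endomorphism Z of V that commutes with all elements of A is a scalar multiple of the identity; that is, the commutant End_A(V) of A in End_ℂ(V) equals ℂ·id_V. (Dixmier's version of Schur's lemma, part (ii) of Lemma 1.8.) -/

import Mathlib

/-!
By Schur's argument on kernels and images, an endomorphism commuting with an irreducible family
is zero or invertible; so if `Z` is not a scalar, `Z - c` is invertible for every `c : ℂ`, i.e.
`Z` has empty spectrum. Then every nonzero polynomial in `Z` is invertible, `X ↦ Z` extends to an
embedding of `ℂ(X)` into (a commutative subalgebra of) `End V`, and evaluation at a nonzero vector
embeds `ℂ(X)` linearly into `V`. But `ℂ(X)` has dimension `#ℂ = 𝔠` over `ℂ`, while `V` has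
countable dimension.
-/

open Polynomial Cardinal
open scoped IsMulCommutative

universe u v

section Schur

variable {R M : Type*} [CommRing R] [AddCommGroup M] [Module R M] {S : Set (Module.End R M)}

lemma eq_zero_or_isUnit_of_mem_centralizer
    (hS : ∀ p : Submodule R M, (∀ T ∈ S, ∀ x ∈ p, T x ∈ p) → p = ⊥ ∨ p = ⊤)
    {D : Module.End R M} (hD : D ∈ Subalgebra.centralizer R S) : D = 0 ∨ IsUnit D := by
  have hcomm (T : Module.End R M) (hT : T ∈ S) (x : M) : D (T x) = T (D x) :=
    (LinearMap.congr_fun (hD T hT) x).symm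
  rcases hS (LinearMap.ker D) fun T hT x hx => by simp_all with hker | hker
  · rcases hS (LinearMap.range D) (fun T hT _ ⟨y, hy⟩ => ⟨T y, hy ▸ hcomm T hT y⟩)
      with hrange | hrange
    · exact .inl (LinearMap.range_eq_bot.mp hrange)
    · exact .inr ((Module.End.isUnit_iff D).mpr
        ⟨LinearMap.ker_eq_bot.mp hker, LinearMap.range_eq_top.mp hrange⟩)
  · exact .inl (LinearMap.ker_eq_top.mp hker)

lemma exists_eq_smul_one_or_spectrum_eq_empty {K V : Type*} [Field K] [AddCommGroup V]
    [Module K V] {S : Set (Module.End K V)}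
    (hS : ∀ p : Submodule K V, (∀ T ∈ S, ∀ x ∈ p, T x ∈ p) → p = ⊥ ∨ p = ⊤)
    {Z : Module.End K V} (hZ : Z ∈ Subalgebra.centralizer K S) :
    (∃ c : K, Z = c • 1) ∨ spectrum K Z = ∅ := by
  refine or_iff_not_imp_left.mpr fun hne => Set.eq_empty_of_forall_notMem fun c hc => ?_
  have hmem : algebraMap K _ c - Z ∈ Subalgebra.centralizer K S :=
    sub_mem (Subalgebra.algebraMap_mem _ c) hZ
  rcases eq_zero_or_isUnit_of_mem_centralizer hS hmem with h | h
  · exact hne ⟨c, by rw [← Algebra.algebraMap_eq_smul_one]; exact (sub_eq_zero.mp h).symm⟩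
  · exact hc h

end Schur

section EmptySpectrum

variable {K : Type u} {A : Type*} [Field K] [Ring A] [Algebra K A]

lemma isUnit_aeval_of_spectrum_eq_empty [IsAlgClosed K] {a : A} (ha : spectrum K a = ∅)
    {p : K[X]} (hp : p ≠ 0) : IsUnit (aeval a p) := by
  rcases le_or_gt p.degree 0 with hdeg | hdeg
  · rw [eq_C_of_degree_le_zero hdeg] at hp ⊢
    rw [aeval_C]
    exact (IsUnit.mk0 _ (C_ne_zero.mp hp)).map _
  · refine spectrum.isUnit_of_zero_notMem K ?_
    simp [spectrum.map_polynomial_aeval_of_degree_pos a p hdeg, ha]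

lemma isUnit_of_isUnit_coe_centralizer {s : Set A} {x : Subalgebra.centralizer K s}
    (hx : IsUnit (x : A)) : IsUnit x := by
  obtain ⟨u, hu⟩ := hx
  have hinv : (↑u⁻¹ : A) ∈ Subalgebra.centralizer K s := fun g hg =>
    Commute.units_inv_right (by rw [hu]; exact x.2 g hg) |>.eq
  exact ⟨⟨x, ⟨_, hinv⟩, Subtype.ext (by simp [← hu]), Subtype.ext (by simp [← hu])⟩,
    rfl⟩

variable (K) in
abbrev bicommutant (a : A) : Subalgebra K A :=
  Subalgebra.centralizer K (Subalgebra.centralizer K ({a} : Set A) : Set A)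

instance (a : A) : IsMulCommutative (bicommutant K a) :=
  .of_setLike_mul_comm fun x hx y hy =>
    Set.centralizer_centralizer_comm_of_comm (by simp) x hx y hy

lemma self_mem_bicommutant (a : A) : a ∈ bicommutant K a :=
  Set.subset_centralizer_centralizer rfl

/-- The target is the bicommutant rather than `A` because localizations only lift into
commutative rings. -/
noncomputable def ratFuncToBicommutant [IsAlgClosed K] {a : A} (ha : spectrum K a = ∅) :
    RatFunc K →ₐ[K] bicommutant K a :=
  IsLocalization.liftAlgHom (M := nonZeroDivisors K[X]) (f := aeval ⟨a, self_mem_bicommutant a⟩)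
    fun p => isUnit_of_isUnit_coe_centralizer <| by
      rw [aeval_subalgebra_coe]
      exact isUnit_aeval_of_spectrum_eq_empty ha (nonZeroDivisors.ne_zero p.2)

theorem Module.End.lift_cardinalMk_le_lift_rank_of_spectrum_eq_empty {V : Type v}
    [IsAlgClosed K] [AddCommGroup V] [Module K V] [Nontrivial V] {f : Module.End K V}
    (hf : spectrum K f = ∅) : lift.{v} #K ≤ lift.{u} (Module.rank K V) := by
  obtain ⟨v, hv⟩ := exists_ne (0 : V)
  let φ := ratFuncToBicommutant hf
  let ev : RatFunc K →ₗ[K] V :=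
    LinearMap.applyₗ v ∘ₗ (bicommutant K f).val.toLinearMap ∘ₗ φ.toLinearMap
  have hev : Function.Injective ev := by
    refine (injective_iff_map_eq_zero ev).mpr fun g hg => by_contra fun hg0 => hv ?_
    have hunit : IsUnit (φ g : Module.End K V) := ((Ne.isUnit hg0).map φ).map (Subalgebra.val _)
    exact ((Module.End.isUnit_iff _).mp hunit).1 (hg.trans (map_zero _).symm)
  calc lift.{v} #K ≤ lift.{v} #(RatFunc K) :=
        lift_le.mpr (mk_le_of_injective (algebraMap K _).injective)
    _ = lift.{v} (Module.rank K (RatFunc K)) := by rw [Algebra.Transcendental.rank_eq_cardinalMk]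
    _ ≤ lift.{u} (Module.rank K V) := LinearMap.lift_rank_le_of_injective ev hev

end EmptySpectrum

theorem dixmier_schur {V : Type*} [AddCommGroup V] [Module ℂ V]
    (hcount : ∃ s : Set V, s.Countable ∧ Submodule.span ℂ s = ⊤)
    (A : Subalgebra ℂ (Module.End ℂ V))
    (hirr : ∀ p : Submodule ℂ V, (∀ T ∈ A, ∀ x ∈ p, T x ∈ p) → p = ⊥ ∨ p = ⊤)
    (Z : Module.End ℂ V) (hZ : ∀ T ∈ A, Z * T = T * Z) :
    ∃ c : ℂ, Z = c • (1 : Module.End ℂ V) := by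
  rcases subsingleton_or_nontrivial V with _ | _
  · exact ⟨0, Subsingleton.elim _ _⟩
  refine (exists_eq_smul_one_or_spectrum_eq_empty hirr fun T hT => (hZ T hT).symm).resolve_right
    fun hspec => ?_
  obtain ⟨s, hs, hspan⟩ := hcount
  have hrank : Module.rank ℂ V ≤ ℵ₀ := by
    rw [← rank_top ℂ V, ← hspan]
    exact (rank_span_le s).trans (mk_le_aleph0_iff.mpr hs.to_subtype)
  have hcont := Module.End.lift_cardinalMk_le_lift_rank_of_spectrum_eq_empty hspec
  rw [mk_complex, lift_continuum] at hcont
  exact aleph0_lt_continuum.not_ge (hcont.trans (lift_le_aleph0.mpr hrank))
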